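/- Let T ⊆ ℝ^{n−1} be open and quasi-convex, and let ψ₁, ψ₂ : T → ℝ be Lipschitz functions with ψ₁(x') < ψ₂(x') for all x' ∈ T. Then the set S := {(x', xₙ) ∈ T × ℝ : ψ₁(x') < xₙ < ψ₂(x')} is quasi-convex. -/

import Mathlib

open scoped BigOperators NNReal

/-- `A` is quasi-convex with constant `M`: any two points of `A` are joined by a
rectifiable arc in `A` of length (total variation) at most `M` times their distance. -/
def QuasiConvexWith {X : Type*} [PseudoMetricSpace X] (M : ℝ) (A : Set X) : Prop :=
  ∀ a ∈ A, ∀ b ∈ A, ∃ γ : ℝ → X,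
    ContinuousOn γ (Set.Icc 0 1) ∧ γ 0 = a ∧ γ 1 = b ∧
    (∀ t ∈ Set.Icc (0 : ℝ) 1, γ t ∈ A) ∧
    eVariationOn γ (Set.Icc 0 1) ≤ ENNReal.ofReal (M * dist a b)

noncomputable section

/-- `ℝⁿ = ℝ^(n-1) × ℝ` with the Euclidean (ℓ²) norm. -/
abbrev EucProd1 (m : ℕ) := WithLp 2 (EuclideanSpace ℝ (Fin m) × ℝ)

/-- The point `(x', t)` of `ℝ^(n-1) × ℝ` as a point of the Euclidean product. -/
abbrev eucMk1 {m : ℕ} (u : EuclideanSpace ℝ (Fin m)) (t : ℝ) : EucProd1 m :=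
  (WithLp.equiv 2 (EuclideanSpace ℝ (Fin m) × ℝ)).symm (u, t)

/-- Splitting lemma for `eVariationOn`. -/
lemma evar_le_add {α E F G : Type*} [LinearOrder α] [PseudoEMetricSpace E]
    [PseudoEMetricSpace F] [PseudoEMetricSpace G] (f : α → E) (g : α → F) (h : α → G)
    (s : Set α)
    (H : ∀ x ∈ s, ∀ y ∈ s, edist (h x) (h y) ≤ edist (f x) (f y) + edist (g x) (g y)) :
    eVariationOn h s ≤ eVariationOn f s + eVariationOn g s := by
  apply iSup_le _
  rintro ⟨n, ⟨u, hu, us⟩⟩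
  calc
    (∑ i ∈ Finset.range n, edist (h (u (i + 1))) (h (u i)))
        ≤ ∑ i ∈ Finset.range n,
            (edist (f (u (i + 1))) (f (u i)) + edist (g (u (i + 1))) (g (u i))) :=
      Finset.sum_le_sum fun i _ => H _ (us _) _ (us _)
    _ = (∑ i ∈ Finset.range n, edist (f (u (i + 1))) (f (u i)))
          + ∑ i ∈ Finset.range n, edist (g (u (i + 1))) (g (u i)) :=
      Finset.sum_add_distrib
    _ ≤ _ := add_le_add (eVariationOn.sum_le (f := f) hu us) (eVariationOn.sum_le (f := g) hu us)

/-- Variation of an affine map on `[0,1]`. -/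
lemma evar_affine (c r : ℝ) :
    eVariationOn (fun x : ℝ => c + r * x) (Set.Icc 0 1) ≤ ENNReal.ofReal |r| := by
  apply iSup_le _
  rintro ⟨n, ⟨u, hu, us⟩⟩
  have key : ∀ i, edist (c + r * u (i + 1)) (c + r * u i)
      = ENNReal.ofReal (|r| * (u (i + 1) - u i)) := by
    intro i
    rw [edist_dist, Real.dist_eq]
    congr 1
    have h1 : (0:ℝ) ≤ u (i+1) - u i := sub_nonneg.2 (hu (Nat.le_succ i))
    have : c + r * u (i + 1) - (c + r * u i) = r * (u (i+1) - u i) := by ring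
    rw [this, abs_mul, abs_of_nonneg h1]
  calc
    (∑ i ∈ Finset.range n, edist ((fun x : ℝ => c + r * x) (u (i + 1)))
        ((fun x : ℝ => c + r * x) (u i)))
        = ∑ i ∈ Finset.range n, ENNReal.ofReal (|r| * (u (i + 1) - u i)) := by
      simp only [key]
    _ = ENNReal.ofReal (∑ i ∈ Finset.range n, |r| * (u (i + 1) - u i)) := by
      rw [ENNReal.ofReal_sum_of_nonneg]
      intro i _
      exact mul_nonneg (abs_nonneg r) (sub_nonneg.2 (hu (Nat.le_succ i)))
    _ ≤ ENNReal.ofReal |r| := by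
      apply ENNReal.ofReal_le_ofReal
      have : (∑ i ∈ Finset.range n, |r| * (u (i + 1) - u i)) = |r| * (u n - u 0) := by
        rw [← Finset.mul_sum, Finset.sum_range_sub (fun i => u i)]
      rw [this]
      have h0 : (0:ℝ) ≤ u 0 := (us 0).1
      have h1 : u n ≤ 1 := (us n).2
      nlinarith [abs_nonneg r]
/-- `√(a² + b²) ≤ a + b` for nonnegative reals. -/
lemma sqrt_sq_add_sq_le (a b : ℝ) (ha : 0 ≤ a) (hb : 0 ≤ b) :
    Real.sqrt (a ^ 2 + b ^ 2) ≤ a + b := by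
  have h : a ^ 2 + b ^ 2 ≤ (a + b) ^ 2 := by nlinarith
  calc Real.sqrt (a ^ 2 + b ^ 2) ≤ Real.sqrt ((a + b) ^ 2) := Real.sqrt_le_sqrt h
    _ = a + b := Real.sqrt_sq (by linarith)

lemma le_sqrt_sq_add_sq (a b : ℝ) (ha : 0 ≤ a) :
    a ≤ Real.sqrt (a ^ 2 + b ^ 2) := by
  calc a = Real.sqrt (a ^ 2) := (Real.sqrt_sq ha).symm
    _ ≤ Real.sqrt (a ^ 2 + b ^ 2) := Real.sqrt_le_sqrt (by nlinarith)

lemma dist_eucMk1 {m : ℕ} (u v : EuclideanSpace ℝ (Fin m)) (s t : ℝ) :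
    dist (eucMk1 u s) (eucMk1 v t) = Real.sqrt (dist u v ^ 2 + dist s t ^ 2) :=
  WithLp.prod_dist_eq_of_L2 _ _

set_option maxHeartbeats 2000000 in
/-- If `T ⊆ ℝ^(n-1)` is open and quasi-convex, and `ψ₁ < ψ₂` are Lipschitz on `T`, then the
band `S = {(x', xₙ) : x' ∈ T, ψ₁(x') < xₙ < ψ₂(x')}` is quasi-convex. -/
theorem band_quasiConvex (m : ℕ) (T : Set (EuclideanSpace ℝ (Fin m)))
    (hT : IsOpen T) (hqc : ∃ M > 0, QuasiConvexWith M T)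
    (ψ₁ ψ₂ : EuclideanSpace ℝ (Fin m) → ℝ)
    (h₁ : ∃ K : ℝ≥0, LipschitzOnWith K ψ₁ T)
    (h₂ : ∃ K : ℝ≥0, LipschitzOnWith K ψ₂ T)
    (hlt : ∀ u ∈ T, ψ₁ u < ψ₂ u)
    (S : Set (EucProd1 m))
    (hS : S = {z | ∃ u ∈ T, ∃ t : ℝ, ψ₁ u < t ∧ t < ψ₂ u ∧ z = eucMk1 u t}) :
    ∃ M' > 0, QuasiConvexWith M' S := by
  subst hS
  obtain ⟨M, hM, hQC⟩ := hqc
  obtain ⟨K₁, hK₁⟩ := h₁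
  obtain ⟨K₂, hK₂⟩ := h₂
  set Kr : ℝ := (K₁ : ℝ) + (K₂ : ℝ) with hKr
  have hKr0 : 0 ≤ Kr := by positivity
  -- Lipschitz bound for the gap function, in real form
  have hKg : LipschitzOnWith (K₁ + K₂) (fun x => ψ₂ x - ψ₁ x) T := by
    apply LipschitzOnWith.of_dist_le_mul
    intro x hx y hy
    have d1 := hK₁.dist_le_mul x hx y hy
    have d2 := hK₂.dist_le_mul x hx y hy
    rw [Real.dist_eq] at d1 d2 ⊢
    have e : ψ₂ x - ψ₁ x - (ψ₂ y - ψ₁ y) = (ψ₂ x - ψ₂ y) - (ψ₁ x - ψ₁ y) := by ring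
    rw [e]
    refine (abs_sub _ _).trans ?_
    push_cast
    linarith
  have hgap : ∀ x ∈ T, ∀ y ∈ T,
      |(ψ₂ x - ψ₁ x) - (ψ₂ y - ψ₁ y)| ≤ Kr * dist x y := by
    intro x hx y hy
    have := hKg.dist_le_mul x hx y hy
    rw [Real.dist_eq] at this
    refine this.trans_eq ?_
    push_cast [hKr]
    ring
  refine ⟨M + (K₁ : ℝ) * M + 1 + (K₁ : ℝ) + Kr + 2 * Kr * M, by positivity, ?_⟩
  intro a ha b hb
  simp only [Set.mem_setOf_eq] at ha hb
  obtain ⟨u, hu, s, hs1, hs2, rfl⟩ := ha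
  obtain ⟨v, hv, t, ht1, ht2, rfl⟩ := hb
  obtain ⟨γ, hγc, hγ0, hγ1, hγT, hγvar⟩ := hQC u hu v hv
  have hγmaps : Set.MapsTo γ (Set.Icc 0 1) T := fun x hx => hγT x hx
  set d1 : ℝ := dist u v with hd1
  set D : ℝ := dist (eucMk1 u s) (eucMk1 v t) with hD
  have hD0 : 0 ≤ D := dist_nonneg
  have hd1D : d1 ≤ D := by
    rw [hD, dist_eucMk1]
    exact le_sqrt_sq_add_sq _ _ dist_nonneg
  have hd2D : dist s t ≤ D := by
    rw [hD, dist_eucMk1, add_comm (dist u v ^ 2)]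
    exact le_sqrt_sq_add_sq _ _ dist_nonneg
  set gu : ℝ := ψ₂ u - ψ₁ u with hgu
  set gv : ℝ := ψ₂ v - ψ₁ v with hgv
  have hgu0 : 0 < gu := sub_pos.2 (hlt u hu)
  have hgv0 : 0 < gv := sub_pos.2 (hlt v hv)
  set θa : ℝ := (s - ψ₁ u) / gu with hθa
  set θb : ℝ := (t - ψ₁ v) / gv with hθb
  have hθa0 : 0 < θa := div_pos (by linarith) hgu0
  have hθa1 : θa < 1 := (div_lt_one hgu0).2 (by rw [hgu]; linarith)
  have hθb0 : 0 < θb := div_pos (by linarith) hgv0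
  have hθb1 : θb < 1 := (div_lt_one hgv0).2 (by rw [hgv]; linarith)
  have keya : θa * gu = s - ψ₁ u := div_mul_cancel₀ _ hgu0.ne'
  have keyb : θb * gv = t - ψ₁ v := div_mul_cancel₀ _ hgv0.ne'
  set θ : ℝ → ℝ := fun τ => θa + τ * (θb - θa) with hθ
  set w : ℝ → ℝ := fun τ => ψ₂ (γ τ) - ψ₁ (γ τ) with hw
  set h : ℝ → ℝ := fun τ => ψ₁ (γ τ) + θ τ * w τ with hh
  set z : ℝ → EucProd1 m := fun τ => eucMk1 (γ τ) (h τ) with hz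
  -- bounds on θ on [0,1]
  have hθmem : ∀ τ ∈ Set.Icc (0:ℝ) 1, 0 < θ τ ∧ θ τ < 1 := by
    rintro τ ⟨hτ0, hτ1⟩
    constructor
    · have hmin : min θa θb ≤ θ τ := by
        rcases le_total θa θb with hab | hab
        · rw [min_eq_left hab]
          have := mul_nonneg hτ0 (sub_nonneg.2 hab)
          simp only [hθ]; linarith
        · rw [min_eq_right hab]
          have := mul_nonneg (sub_nonneg.2 hτ1) (sub_nonneg.2 hab)
          simp only [hθ]; nlinarith
      exact (lt_min hθa0 hθb0).trans_le hmin
    · have hmax : θ τ ≤ max θa θb := by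
        rcases le_total θa θb with hab | hab
        · rw [max_eq_right hab]
          have := mul_nonneg (sub_nonneg.2 hτ1) (sub_nonneg.2 hab)
          simp only [hθ]; nlinarith
        · rw [max_eq_left hab]
          have h2 := mul_nonpos_of_nonneg_of_nonpos hτ0 (sub_nonpos.2 hab)
          simp only [hθ]; linarith
      exact hmax.trans_lt (max_lt hθa1 hθb1)
  have hwpos : ∀ τ ∈ Set.Icc (0:ℝ) 1, 0 < w τ := by
    intro τ hτ
    exact sub_pos.2 (hlt _ (hγT τ hτ))
  -- endpoints
  have hmem0 : (0:ℝ) ∈ Set.Icc (0:ℝ) 1 := by constructor <;> norm_num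
  have hh0 : h 0 = s := by
    simp only [hh, hθ, hw, hγ0, zero_mul, add_zero, ← hgu]
    linarith [keya]
  have hh1 : h 1 = t := by
    simp only [hh, hθ, hw, hγ1, one_mul, ← hgv]
    have : θa + (θb - θa) = θb := by ring
    rw [this]
    linarith [keyb]
  -- distance bound along the curve
  have hMd1 : 0 ≤ M * d1 := mul_nonneg hM.le dist_nonneg
  have hγdist : ∀ τ ∈ Set.Icc (0:ℝ) 1, dist (γ τ) u ≤ M * d1 := by
    intro τ hτ
    have h1 : edist (γ τ) (γ 0) ≤ eVariationOn γ (Set.Icc 0 1) :=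
      eVariationOn.edist_le γ hτ hmem0
    rw [hγ0, edist_dist] at h1
    have h2 := h1.trans hγvar
    exact (ENNReal.ofReal_le_ofReal_iff hMd1).1 h2
  set B : ℝ := gu + Kr * (M * d1) with hB
  have hB0 : 0 ≤ B := by positivity
  have hwB : ∀ τ ∈ Set.Icc (0:ℝ) 1, w τ ≤ B := by
    intro τ hτ
    have h1 := hgap (γ τ) (hγT τ hτ) u hu
    rw [← hgu] at h1
    have h2 := (abs_le.1 h1).2
    have h3 := mul_le_mul_of_nonneg_left (hγdist τ hτ) hKr0
    simp only [hw, hB] at *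
    linarith
  refine ⟨z, ?_, ?_, ?_, ?_, ?_⟩
  · -- continuity
    have hc1 : ContinuousOn (fun τ => ψ₁ (γ τ)) (Set.Icc 0 1) :=
      hK₁.continuousOn.comp hγc hγmaps
    have hc2 : ContinuousOn (fun τ => ψ₂ (γ τ)) (Set.Icc 0 1) :=
      hK₂.continuousOn.comp hγc hγmaps
    have hcθ : Continuous θ := by fun_prop
    have hch : ContinuousOn h (Set.Icc 0 1) :=
      hc1.add ((hcθ.continuousOn).mul (hc2.sub hc1))
    exact (WithLp.prod_continuous_toLp 2 _ _).comp_continuousOn (ContinuousOn.prodMk hγc hch)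
  · simp only [hz, hh0, hγ0]
  · simp only [hz, hh1, hγ1]
  · -- membership
    intro τ hτ
    obtain ⟨hθp, hθl⟩ := hθmem τ hτ
    have hwp := hwpos τ hτ
    have k1 : 0 < θ τ * w τ := mul_pos hθp hwp
    have k2 : θ τ * w τ < w τ := mul_lt_of_lt_one_left hwp hθl
    refine ⟨γ τ, hγT τ hτ, h τ, ?_, ?_, rfl⟩
    · simp only [hh]
      linarith
    · simp only [hh]
      have hwdef : w τ = ψ₂ (γ τ) - ψ₁ (γ τ) := rfl
      linarith [hwdef ▸ k2]
  · -- variation bound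
    have e1 : eVariationOn z (Set.Icc 0 1) ≤
        eVariationOn γ (Set.Icc 0 1) + eVariationOn h (Set.Icc 0 1) := by
      apply evar_le_add γ h z
      intro x hx y hy
      rw [edist_dist, edist_dist, edist_dist,
        ← ENNReal.ofReal_add dist_nonneg dist_nonneg]
      apply ENNReal.ofReal_le_ofReal
      have heq : dist (z x) (z y) = Real.sqrt (dist (γ x) (γ y) ^ 2 + dist (h x) (h y) ^ 2) :=
        dist_eucMk1 _ _ _ _
      rw [heq]
      exact sqrt_sq_add_sq_le _ _ dist_nonneg dist_nonneg
    have e2 : eVariationOn h (Set.Icc 0 1) ≤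
        eVariationOn (ψ₁ ∘ γ) (Set.Icc 0 1) +
          eVariationOn (fun τ => θ τ * w τ) (Set.Icc 0 1) := by
      apply evar_le_add (ψ₁ ∘ γ) (fun τ => θ τ * w τ) h
      intro x hx y hy
      rw [edist_dist, edist_dist, edist_dist,
        ← ENNReal.ofReal_add dist_nonneg dist_nonneg]
      apply ENNReal.ofReal_le_ofReal
      simp only [Real.dist_eq, hh, Function.comp]
      have e : ψ₁ (γ x) + θ x * w x - (ψ₁ (γ y) + θ y * w y)
          = (ψ₁ (γ x) - ψ₁ (γ y)) + (θ x * w x - θ y * w y) := by ring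
      rw [e]
      exact abs_add_le _ _
    have e3 : eVariationOn (ψ₁ ∘ γ) (Set.Icc 0 1) ≤
        ENNReal.ofReal ((K₁ : ℝ) * (M * d1)) := by
      refine (hK₁.comp_eVariationOn_le hγmaps).trans ?_
      calc (K₁ : ENNReal) * eVariationOn γ (Set.Icc 0 1)
          ≤ (K₁ : ENNReal) * ENNReal.ofReal (M * d1) := mul_le_mul_right hγvar _
        _ = ENNReal.ofReal ((K₁ : ℝ) * (M * d1)) := by
            rw [← ENNReal.ofReal_coe_nnreal, ← ENNReal.ofReal_mul K₁.coe_nonneg]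
    have e6 : eVariationOn w (Set.Icc 0 1) ≤ ENNReal.ofReal (Kr * (M * d1)) := by
      refine (hKg.comp_eVariationOn_le hγmaps).trans ?_
      calc ((K₁ + K₂ : ℝ≥0) : ENNReal) * eVariationOn γ (Set.Icc 0 1)
          ≤ ((K₁ + K₂ : ℝ≥0) : ENNReal) * ENNReal.ofReal (M * d1) := mul_le_mul_right hγvar _
        _ = ENNReal.ofReal (Kr * (M * d1)) := by
            rw [← ENNReal.ofReal_coe_nnreal, ← ENNReal.ofReal_mul (K₁ + K₂).coe_nonneg]
            have hc : ((K₁ + K₂ : ℝ≥0) : ℝ) = Kr := by push_cast [hKr]; try ring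
            rw [hc]
    have e4 : eVariationOn (fun τ => θ τ * w τ) (Set.Icc 0 1) ≤
        eVariationOn (fun x : ℝ => B * θa + B * (θb - θa) * x) (Set.Icc 0 1) +
          eVariationOn w (Set.Icc 0 1) := by
      apply evar_le_add _ w _
      intro x hx y hy
      rw [edist_dist, edist_dist, edist_dist,
        ← ENNReal.ofReal_add dist_nonneg dist_nonneg]
      apply ENNReal.ofReal_le_ofReal
      simp only [Real.dist_eq]
      have e : B * θa + B * (θb - θa) * x - (B * θa + B * (θb - θa) * y)
          = B * (θ x - θ y) := by simp only [hθ]; ring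
      rw [e, abs_mul, abs_of_nonneg hB0]
      have key : θ x * w x - θ y * w y = (θ x - θ y) * w x + θ y * (w x - w y) := by ring
      obtain ⟨hθx0, hθx1⟩ := hθmem x hx
      obtain ⟨hθy0, hθy1⟩ := hθmem y hy
      have hwx := (hwpos x hx).le
      have hwBx := hwB x hx
      calc |θ x * w x - θ y * w y| ≤ |(θ x - θ y) * w x| + |θ y * (w x - w y)| :=
            key ▸ abs_add_le _ _
        _ = |θ x - θ y| * w x + θ y * |w x - w y| := by
            rw [abs_mul, abs_mul, abs_of_nonneg hwx, abs_of_nonneg hθy0.le]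
        _ ≤ B * |θ x - θ y| + |w x - w y| := by
            have p1 : |θ x - θ y| * w x ≤ |θ x - θ y| * B :=
              mul_le_mul_of_nonneg_left hwBx (abs_nonneg _)
            have p2 : θ y * |w x - w y| ≤ 1 * |w x - w y| :=
              mul_le_mul_of_nonneg_right hθy1.le (abs_nonneg _)
            linarith [p1, p2]
    have e5 : eVariationOn (fun x : ℝ => B * θa + B * (θb - θa) * x) (Set.Icc 0 1) ≤
        ENNReal.ofReal (B * |θb - θa|) := by
      have := evar_affine (B * θa) (B * (θb - θa))
      have heq : (fun x : ℝ => B * θa + B * (θb - θa) * x)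
          = fun x : ℝ => B * θa + B * (θb - θa) * x := rfl
      refine le_trans (le_of_eq ?_) (this.trans (le_of_eq ?_))
      · rfl
      · rw [abs_mul, abs_of_nonneg hB0]
    -- the key algebraic bound on B * |θb - θa|
    have hts : t - s = (ψ₁ v - ψ₁ u) + θb * (gv - gu) + (θb - θa) * gu := by
      have e1' : s = ψ₁ u + θa * gu := by linarith [keya]
      have e2' : t = ψ₁ v + θb * gv := by linarith [keyb]
      rw [e1', e2']; ring
    have hb1 : |ψ₁ v - ψ₁ u| ≤ (K₁ : ℝ) * d1 := by
      have := hK₁.dist_le_mul v hv u hu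
      rw [Real.dist_eq, dist_comm v u] at this
      exact this
    have hb2 : |gv - gu| ≤ Kr * d1 := by
      have := hgap v hv u hu
      rw [← hgv, ← hgu, dist_comm v u] at this
      exact this
    have hb3 : |t - s| ≤ dist s t := by
      rw [Real.dist_eq, abs_sub_comm]
    have hA : |θb - θa| * gu ≤ dist s t + (K₁ : ℝ) * d1 + Kr * d1 := by
      have q1 : θb * (gv - gu) ≤ θb * |gv - gu| :=
        mul_le_mul_of_nonneg_left (le_abs_self _) hθb0.le
      have q2 : -(θb * |gv - gu|) ≤ θb * (gv - gu) := by
        have := mul_le_mul_of_nonneg_left (neg_abs_le (gv - gu)) hθb0.le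
        linarith
      have q3 : θb * |gv - gu| ≤ |gv - gu| := by
        have := mul_le_mul_of_nonneg_right hθb1.le (abs_nonneg (gv - gu))
        linarith
      rcases abs_cases (θb - θa) with ⟨he, _⟩ | ⟨he, _⟩ <;> rw [he] <;>
        linarith [(abs_le.1 hb1).1, (abs_le.1 hb1).2, (abs_le.1 hb2).1, (abs_le.1 hb2).2,
          (abs_le.1 hb3).1, (abs_le.1 hb3).2, hts, q1, q2, q3]
    have hΔθ1 : |θb - θa| ≤ 1 := by
      rw [abs_le]; constructor <;> linarith
    have hBθ : B * |θb - θa| ≤ dist s t + ((K₁ : ℝ) + Kr) * d1 + Kr * (M * d1) := by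
      have p1 : Kr * (M * d1) * |θb - θa| ≤ Kr * (M * d1) :=
        mul_le_of_le_one_right (by positivity) hΔθ1
      simp only [hB]
      nlinarith [hA]
    -- final assembly
    have hfinal : M * d1 + ((K₁ : ℝ) * (M * d1) + (B * |θb - θa| + Kr * (M * d1)))
        ≤ (M + (K₁ : ℝ) * M + 1 + (K₁ : ℝ) + Kr + 2 * Kr * M) * D := by
      have hc : (0:ℝ) ≤ M + (K₁ : ℝ) * M + (K₁ : ℝ) + Kr + 2 * Kr * M := by positivity
      have hp := mul_le_mul_of_nonneg_left hd1D hc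
      nlinarith [hBθ, hd2D]
    calc eVariationOn z (Set.Icc 0 1)
        ≤ eVariationOn γ (Set.Icc 0 1) + eVariationOn h (Set.Icc 0 1) := e1
      _ ≤ eVariationOn γ (Set.Icc 0 1) +
            (eVariationOn (ψ₁ ∘ γ) (Set.Icc 0 1) +
              eVariationOn (fun τ => θ τ * w τ) (Set.Icc 0 1)) := add_le_add_right e2 _
      _ ≤ ENNReal.ofReal (M * d1) +
            (ENNReal.ofReal ((K₁ : ℝ) * (M * d1)) +
              (ENNReal.ofReal (B * |θb - θa|) + ENNReal.ofReal (Kr * (M * d1)))) := by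
          refine add_le_add hγvar (add_le_add e3 ?_)
          exact e4.trans (add_le_add e5 e6)
      _ = ENNReal.ofReal (M * d1 + ((K₁ : ℝ) * (M * d1) +
            (B * |θb - θa| + Kr * (M * d1)))) := by
          rw [← ENNReal.ofReal_add (by positivity) (by positivity),
            ← ENNReal.ofReal_add (by positivity) (by positivity),
            ← ENNReal.ofReal_add (by positivity) (by positivity)]
      _ ≤ ENNReal.ofReal ((M + (K₁ : ℝ) * M + 1 + (K₁ : ℝ) + Kr + 2 * Kr * M) * D) :=
          ENNReal.ofReal_le_ofReal hfinal


end
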